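/- arXiv:1606.06119 — 5 statements merged into one kernel-verified Lean document; each statement's English description precedes it below -/
import Mathlib

section
/- Let A be a real number and a_1,...,a_n a finite sequence of reals bounded above by A. Suppose there is c < A with sum_{i=1}^n a_i ≥ n·c. Then for any c' < c there exist l integers 1 ≤ t_1 < ... < t_l ≤ n such that for every k = 1,...,l and every j = 1,...,t_k one has sum_{i=j}^{t_k} a_i ≥ (t_k - j + 1)·c'. Moreover l/n ≥ (c - c')/(A - c'). -/
/-!
Put `S m = ∑_{i=1}^{m} (a i - c')` and call `m ≥ 1` a record if `S j ≤ S m` for all `j < m`. At a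
record `t` every block sum `∑_{i=j}^{t} (a i - c') = S t - S (j - 1)` is nonnegative, so records are
Pliss times. Each increment of `S` is at most `A - c'`, so by induction `S m` is at most
`A - c'` times the number of records up to `m`: a record exceeds its predecessor by at most
`A - c'`, and a non-record lies below an earlier value. At `m = n` this gives
`n (c - c') ≤ S n ≤ #records · (A - c')`.
-/

open Finset

namespace Pliss

variable {α : Type*}

open Classical in
noncomputable def records [Preorder α] (S : ℕ → α) (n : ℕ) : Finset ℕ :=
  {m ∈ Icc 1 n | ∀ j < m, S j ≤ S m}

lemma records_mono [Preorder α] (S : ℕ → α) : Monotone (records S) := by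
  classical
  exact fun _ _ h => filter_subset_filter _ (Icc_subset_Icc_right h)

lemma le_card_records_nsmul [AddCommMonoid α] [LinearOrder α] [IsOrderedAddMonoid α]
    {S : ℕ → α} {B : α} (hB : 0 ≤ B) (hS₀ : S 0 ≤ 0) {n : ℕ}
    (hstep : ∀ m < n, S (m + 1) ≤ S m + B) {m : ℕ} (hm : m ≤ n) :
    S m ≤ #(records S m) • B := by
  induction m using Nat.strong_induction_on with
  | _ m ih =>
  rcases m with _ | m
  · exact hS₀.trans (nsmul_nonneg hB _)
  by_cases hrec : ∀ j < m + 1, S j ≤ S (m + 1)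
  · have hcard : #(records S m) + 1 ≤ #(records S (m + 1)) := by
      classical
      have hnew : m + 1 ∉ records S m := fun h => by simp [records] at h
      rw [← card_insert_of_notMem hnew]
      refine card_le_card (insert_subset ?_ (records_mono S m.le_succ))
      simpa [records, Nat.lt_add_one_iff] using hrec
    calc S (m + 1) ≤ #(records S m) • B + B :=
          (hstep m hm).trans (add_le_add_left (ih m m.lt_succ_self (by omega)) _)
      _ = (#(records S m) + 1) • B := (succ_nsmul B _).symm
      _ ≤ #(records S (m + 1)) • B := nsmul_le_nsmul_left hB hcard
  · push Not at hrec
    obtain ⟨j, hj, hSj⟩ := hrec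
    calc S (m + 1) ≤ S j := hSj.le
      _ ≤ #(records S j) • B := ih j hj (by omega)
      _ ≤ #(records S (m + 1)) • B := nsmul_le_nsmul_left hB (card_le_card (records_mono S hj.le))

lemma sum_Icc_one_add_sum_Icc {M : Type*} [AddCommMonoid M] (f : ℕ → M) {k t : ℕ} (h : k ≤ t) :
    ∑ i ∈ Icc 1 k, f i + ∑ i ∈ Icc (k + 1) t, f i = ∑ i ∈ Icc 1 t, f i := by
  simpa only [← Icc_add_one_left_eq_Ioc, zero_add] using sum_Ioc_consecutive f k.zero_le h

lemma mul_le_sum_Icc_of_mem_records {a : ℕ → ℝ} {c : ℝ} {n t j : ℕ}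
    (ht : t ∈ records (fun m => ∑ i ∈ Icc 1 m, (a i - c)) n) (hj : 1 ≤ j) (hjt : j ≤ t) :
    ((t : ℝ) - j + 1) * c ≤ ∑ i ∈ Icc j t, a i := by
  obtain ⟨k, rfl⟩ := Nat.exists_eq_add_of_le' hj
  have hrec : ∑ i ∈ Icc 1 k, (a i - c) ≤ ∑ i ∈ Icc 1 t, (a i - c) :=
    (mem_filter.mp ht).2 k (by omega)
  have hblock : 0 ≤ ∑ i ∈ Icc (k + 1) t, (a i - c) := by
    linarith [sum_Icc_one_add_sum_Icc (fun i => a i - c) (by omega : k ≤ t)]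
  rw [sum_sub_distrib, sum_const, Nat.card_Icc, nsmul_eq_mul,
    Nat.cast_sub (by omega : k + 1 ≤ t + 1)] at hblock
  push_cast at hblock ⊢
  linarith

lemma mul_sub_le_card_records_mul {a : ℕ → ℝ} {A c c' : ℝ} {n : ℕ} (hA : ∀ i ∈ Icc 1 n, a i ≤ A)
    (hc'A : c' ≤ A) (hsum : (n : ℝ) * c ≤ ∑ i ∈ Icc 1 n, a i) :
    n * (c - c') ≤ #(records (fun m => ∑ i ∈ Icc 1 m, (a i - c')) n) * (A - c') := by
  have hstep : ∀ m < n, ∑ i ∈ Icc 1 (m + 1), (a i - c') ≤ ∑ i ∈ Icc 1 m, (a i - c') + (A - c') :=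
    fun m hm => by
      rw [sum_Icc_succ_top (by omega)]
      linarith [hA (m + 1) (mem_Icc.mpr ⟨by omega, hm⟩)]
  have hS : ∑ i ∈ Icc 1 n, (a i - c') = ∑ i ∈ Icc 1 n, a i - n * c' := by
    simp [sum_sub_distrib]
  have := le_card_records_nsmul (S := fun m => ∑ i ∈ Icc 1 m, (a i - c'))
    (sub_nonneg.mpr hc'A) (by simp) hstep le_rfl
  rw [nsmul_eq_mul] at this
  linarith

end Pliss

/-- The Pliss lemma. -/
theorem pliss_lemma (n : ℕ) (hn : 0 < n) (a : ℕ → ℝ) (A c c' : ℝ)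
    (hA : ∀ i ∈ Finset.Icc 1 n, a i ≤ A) (hcA : c < A)
    (hsum : (n : ℝ) * c ≤ ∑ i ∈ Finset.Icc 1 n, a i) (hc' : c' < c) :
    ∃ (l : ℕ) (t : Fin l → ℕ), StrictMono t ∧
      (∀ k, 1 ≤ t k ∧ t k ≤ n) ∧
      (∀ k, ∀ j, 1 ≤ j → j ≤ t k →
        ((t k : ℝ) - j + 1) * c' ≤ ∑ i ∈ Finset.Icc j (t k), a i) ∧
      (c - c') / (A - c') ≤ (l : ℝ) / n := by
  set R := Pliss.records (fun m => ∑ i ∈ Icc 1 m, (a i - c')) n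
  have hmem (k : Fin #R) : R.orderEmbOfFin rfl k ∈ R := orderEmbOfFin_mem R rfl k
  refine ⟨#R, R.orderEmbOfFin rfl, (R.orderEmbOfFin rfl).strictMono, fun k => ?_,
    fun k j hj hjk => Pliss.mul_le_sum_Icc_of_mem_records (hmem k) hj hjk, ?_⟩
  · exact mem_Icc.mp (mem_filter.mp (hmem k)).1
  · rw [div_le_div_iff₀ (by linarith) (by exact_mod_cast hn)]
    linarith [Pliss.mul_sub_le_card_records_mul hA (by linarith) hsum]
end

section
/- Let X be a compact metric space, f : X → X continuous, φ : X → ℝ continuous, and x ∈ X. Suppose there are sequences t_i → ∞ of natural numbers and β_i → 0 of positive reals such that x is (β_i, t_i, ∞)-controlled for every i (control at any scale). Then every point y in the ω-limit set of x satisfies lim_{n→∞} (1/n) sum_{k=0}^{n-1} φ(f^k(y)) = 0, and this limit is uniform over ω(x). -/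
/-!
Between consecutive control points the orbit sum of `φ` is at most `β` times the length, and
these bounds add up along any run of control points. Since every window of length `t` contains
a control point, any orbit segment of length `n` is such a run plus two end pieces of length at
most `t`, so its sum is at most `β n + 2 ‖φ‖∞ t`, uniformly in the starting time. By continuity
the same bound holds for Birkhoff sums at every point of the orbit closure, in particular on
`ω(x)`; dividing by `n` and letting `β → 0` gives the uniform vanishing of the averages.
-/

/-- `x` is `(β, t, ∞)`-controlled for `φ` along the orbit of `f`: there is an
unbounded set `P ⊆ ℕ` containing `0` such that any two consecutive elements
`k < l` of `P` satisfy `l - k ≤ t` and the average of `φ` along the orbit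
segment from time `k` to time `l` is at most `β` in absolute value. -/
def ControlledAtScale {X : Type*} (f : X → X) (φ : X → ℝ) (x : X) (β : ℝ) (t : ℕ) : Prop :=
  ∃ P : Set ℕ, 0 ∈ P ∧ ¬ BddAbove P ∧
    ∀ k ∈ P, ∀ l ∈ P, k < l → (∀ m, k < m → m < l → m ∉ P) →
      l - k ≤ t ∧ |(∑ i ∈ Finset.range (l - k), φ (f^[i + k] x)) / ((l : ℝ) - k)| ≤ β

open Finset

namespace ControlPoints

def Consecutive (P : Set ℕ) (k l : ℕ) : Prop :=
  k ∈ P ∧ l ∈ P ∧ k < l ∧ ∀ m, k < m → m < l → m ∉ P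

variable {P : Set ℕ}

theorem exists_consecutive (hP : ¬BddAbove P) {k : ℕ} (hk : k ∈ P) :
    ∃ l, Consecutive P k l := by
  classical
  have hex : ∃ l, l ∈ P ∧ k < l := by simpa using not_bddAbove_iff.1 hP k
  refine ⟨Nat.find hex, hk, (Nat.find_spec hex).1, (Nat.find_spec hex).2, fun m hkm hm hmP => ?_⟩
  exact Nat.find_min hex hm ⟨hmP, hkm⟩

theorem exists_mem_Icc {t : ℕ} (h0 : 0 ∈ P) (hP : ¬BddAbove P)
    (hgap : ∀ k l, Consecutive P k l → l - k ≤ t) (a : ℕ) :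
    ∃ p ∈ P, a ≤ p ∧ p ≤ a + t := by
  classical
  set k := Nat.findGreatest (· ∈ P) a
  have hkP : k ∈ P := Nat.findGreatest_spec (P := (· ∈ P)) (Nat.zero_le a) h0
  have hka : k ≤ a := Nat.findGreatest_le a
  obtain ⟨l, hl⟩ := exists_consecutive hP hkP
  have hal : a < l := by
    by_contra! hla
    exact (Nat.le_findGreatest hla hl.2.1).not_gt hl.2.2.1
  exact ⟨l, hl.2.1, hal.le, by have := hgap k l hl; omega⟩

variable {g : ℕ → ℝ} {β : ℝ}

theorem abs_sum_Ico_le_of_mem (hP : ¬BddAbove P)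
    (hsum : ∀ k l, Consecutive P k l → |∑ j ∈ Ico k l, g j| ≤ β * ((l : ℝ) - k))
    {k l : ℕ} (hk : k ∈ P) (hl : l ∈ P) (hkl : k ≤ l) :
    |∑ j ∈ Ico k l, g j| ≤ β * ((l : ℝ) - k) := by
  induction hd : l - k using Nat.strong_induction_on generalizing k with
  | _ d ih =>
    rcases hkl.eq_or_lt with rfl | hlt
    · simp
    obtain ⟨m, hm⟩ := exists_consecutive hP hk
    have hml : m ≤ l := by
      by_contra! hlm
      exact hm.2.2.2 l hlt hlm hl
    calc |∑ j ∈ Ico k l, g j|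
        = |∑ j ∈ Ico k m, g j + ∑ j ∈ Ico m l, g j| := by
          rw [sum_Ico_consecutive g hm.2.2.1.le hml]
      _ ≤ |∑ j ∈ Ico k m, g j| + |∑ j ∈ Ico m l, g j| := abs_add_le _ _
      _ ≤ β * ((m : ℝ) - k) + β * ((l : ℝ) - m) :=
          add_le_add (hsum k m hm) (ih (l - m) (by have := hm.2.2.1; omega) hm.2.1 hml rfl)
      _ = β * ((l : ℝ) - k) := by ring

theorem abs_sum_Ico_le_of_abs_le {M : ℝ} (hM : ∀ j, |g j| ≤ M) {a b : ℕ} (hab : a ≤ b) :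
    |∑ j ∈ Ico a b, g j| ≤ M * ((b : ℝ) - a) := by
  calc |∑ j ∈ Ico a b, g j| ≤ ∑ j ∈ Ico a b, |g j| := abs_sum_le_sum_abs _ _
    _ ≤ #(Ico a b) • M := sum_le_card_nsmul _ _ _ fun j _ => hM j
    _ = M * ((b : ℝ) - a) := by rw [Nat.card_Ico, nsmul_eq_mul, Nat.cast_sub hab, mul_comm]

theorem abs_sum_Ico_le {M : ℝ} {t : ℕ} (hM : ∀ j, |g j| ≤ M) (hβ : 0 ≤ β)
    (hblock : ∀ k ∈ P, ∀ l ∈ P, k ≤ l → |∑ j ∈ Ico k l, g j| ≤ β * ((l : ℝ) - k))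
    (hwindow : ∀ a, ∃ p ∈ P, a ≤ p ∧ p ≤ a + t) {a b : ℕ} (hab : a ≤ b) :
    |∑ j ∈ Ico a b, g j| ≤ β * ((b : ℝ) - a) + 2 * M * t := by
  have hM0 : 0 ≤ M := (abs_nonneg _).trans (hM 0)
  have hab' : (a : ℝ) ≤ b := by exact_mod_cast hab
  by_cases hshort : b ≤ a + 2 * t
  · have : (b : ℝ) - a ≤ 2 * t := by
      rw [sub_le_iff_le_add']; exact_mod_cast hshort
    calc |∑ j ∈ Ico a b, g j| ≤ M * ((b : ℝ) - a) := abs_sum_Ico_le_of_abs_le hM hab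
      _ ≤ β * ((b : ℝ) - a) + 2 * M * t := by nlinarith
  -- Cut `[a, b)` at the first control point after `a` and the last one before `b`.
  obtain ⟨k, hkP, hak, hka⟩ := hwindow a
  obtain ⟨p, hpP, hbp, hpb⟩ := hwindow (b - t)
  have hkp : k ≤ p := by omega
  have hpb' : p ≤ b := by omega
  have hka' : (k : ℝ) ≤ a + t := by exact_mod_cast hka
  have hbp' : (b : ℝ) ≤ p + t := by exact_mod_cast (show b ≤ p + t by omega)
  have hak' : (a : ℝ) ≤ k := by exact_mod_cast hak
  have hpb'' : (p : ℝ) ≤ b := by exact_mod_cast hpb'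
  rw [← sum_Ico_consecutive g hak (hkp.trans hpb'), ← sum_Ico_consecutive g hkp hpb']
  calc |∑ j ∈ Ico a k, g j + (∑ j ∈ Ico k p, g j + ∑ j ∈ Ico p b, g j)|
      ≤ |∑ j ∈ Ico a k, g j| + (|∑ j ∈ Ico k p, g j| + |∑ j ∈ Ico p b, g j|) :=
        (abs_add_le _ _).trans (add_le_add_right (abs_add_le _ _) _)
    _ ≤ M * ((k : ℝ) - a) + (β * ((p : ℝ) - k) + M * ((b : ℝ) - p)) := by
        gcongr
        exacts [abs_sum_Ico_le_of_abs_le hM hak, hblock k hkP p hpP hkp,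
          abs_sum_Ico_le_of_abs_le hM hpb']
    _ ≤ β * ((b : ℝ) - a) + 2 * M * t := by nlinarith

end ControlPoints

open ControlPoints

namespace ControlledAtScale

variable {X : Type*} {f : X → X} {φ : X → ℝ} {x : X} {β : ℝ} {t : ℕ}

theorem exists_controlPoints (h : ControlledAtScale f φ x β t) :
    ∃ P : Set ℕ, 0 ∈ P ∧ ¬BddAbove P ∧ ∀ k l, Consecutive P k l →
      l - k ≤ t ∧ |∑ j ∈ Ico k l, φ (f^[j] x)| ≤ β * ((l : ℝ) - k) := by
  obtain ⟨P, h0, hP, hctrl⟩ := h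
  refine ⟨P, h0, hP, fun k l ⟨hk, hl, hkl, hcons⟩ => ?_⟩
  obtain ⟨hgap, havg⟩ := hctrl k hk l hl hkl hcons
  have hlen : (0 : ℝ) < (l : ℝ) - k := sub_pos.2 (by exact_mod_cast hkl)
  have hsum : ∑ i ∈ range (l - k), φ (f^[i + k] x) = ∑ j ∈ Ico k l, φ (f^[j] x) := by
    rw [sum_Ico_eq_sum_range]
    simp only [add_comm]
  rw [abs_div, abs_of_pos hlen, div_le_iff₀ hlen, hsum] at havg
  exact ⟨hgap, havg⟩

theorem abs_birkhoffSum_iterate_le {M : ℝ} (h : ControlledAtScale f φ x β t)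
    (hM : ∀ z, |φ z| ≤ M) (hβ : 0 ≤ β) (a n : ℕ) :
    |birkhoffSum f φ n (f^[a] x)| ≤ β * n + 2 * M * t := by
  obtain ⟨P, h0, hP, hctrl⟩ := h.exists_controlPoints
  have hsum : birkhoffSum f φ n (f^[a] x) = ∑ j ∈ Ico a (a + n), φ (f^[j] x) := by
    rw [birkhoffSum, sum_Ico_eq_sum_range, Nat.add_sub_cancel_left]
    simp only [← Function.iterate_add_apply, add_comm]
  have := abs_sum_Ico_le (fun j => hM (f^[j] x)) hβ
    (fun k hk l hl => abs_sum_Ico_le_of_mem hP (fun k l hkl => (hctrl k l hkl).2) hk hl)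
    (exists_mem_Icc h0 hP fun k l hkl => (hctrl k l hkl).1) (Nat.le_add_right a n)
  rwa [hsum, ← add_sub_cancel_left (a : ℝ) n, ← Nat.cast_add]

theorem abs_birkhoffSum_le_of_mem_closure [TopologicalSpace X] {M : ℝ}
    (h : ControlledAtScale f φ x β t) (hf : Continuous f) (hφ : Continuous φ)
    (hM : ∀ z, |φ z| ≤ M) (hβ : 0 ≤ β) (n : ℕ) {y : X}
    (hy : y ∈ closure (Set.range fun k => f^[k] x)) :
    |birkhoffSum f φ n y| ≤ β * n + 2 * M * t := by
  have hclosed : IsClosed {z | |birkhoffSum f φ n z| ≤ β * n + 2 * M * t} :=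
    isClosed_le ((continuous_finsetSum _ fun k _ => hφ.comp (hf.iterate k)).abs)
      continuous_const
  refine closure_minimal ?_ hclosed hy
  rintro _ ⟨a, rfl⟩
  exact h.abs_birkhoffSum_iterate_le hM hβ a n

end ControlledAtScale

theorem control_at_any_scale_vanishing_average_general {X : Type*} [MetricSpace X] [CompactSpace X]
    (f : X → X) (hf : Continuous f) (φ : X → ℝ) (hφ : Continuous φ) (x : X)
    (t : ℕ → ℕ) (β : ℕ → ℝ)
    (hβpos : ∀ i, 0 < β i) (hβ : Filter.Tendsto β Filter.atTop (nhds 0))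
    (hctrl : ∀ i, ControlledAtScale f φ x (β i) (t i)) :
    ∀ ε > 0, ∃ N : ℕ, ∀ y ∈ ⋂ N' : ℕ, closure ((fun k => f^[k] x) '' Set.Ici N'),
      ∀ n ≥ N, |(∑ k ∈ Finset.range n, φ (f^[k] y)) / (n : ℝ)| < ε := by
  intro ε hε
  obtain ⟨M, hM⟩ : ∃ M, ∀ z, |φ z| ≤ M := by
    obtain ⟨M, hM⟩ := isCompact_univ.exists_bound_of_continuousOn hφ.continuousOn
    exact ⟨M, fun z => hM z trivial⟩
  obtain ⟨i, hβi⟩ := (hβ.eventually_lt_const (half_pos hε)).exists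
  obtain ⟨N, hN⟩ := exists_nat_gt (4 * M * t i / ε)
  refine ⟨N, fun y hy n hn => ?_⟩
  have hy : y ∈ closure (Set.range fun k => f^[k] x) :=
    closure_mono (Set.image_subset_range _ _) (Set.mem_iInter.1 hy 0)
  have hbound := (hctrl i).abs_birkhoffSum_le_of_mem_closure hf hφ hM (hβpos i).le n hy
  have hMt : 4 * M * t i < ε * n :=
    ((div_lt_iff₀ hε).1 hN).trans_le (by rw [mul_comm]; gcongr)
  have hM0 : 0 ≤ M := (abs_nonneg _).trans (hM x)
  have hn : (0 : ℝ) < n :=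
    pos_of_mul_pos_right ((by positivity : 0 ≤ 4 * M * t i).trans_lt hMt) hε.le
  rw [abs_div, Nat.abs_cast, div_lt_iff₀ hn]
  calc |∑ k ∈ range n, φ (f^[k] y)| ≤ β i * n + 2 * M * t i := hbound
    _ < ε * n := by nlinarith

/-- Control at any scale implies that Birkhoff averages of `φ` vanish,
uniformly over the ω-limit set of `x`. -/
theorem control_at_any_scale_vanishing_average {X : Type*} [MetricSpace X] [CompactSpace X]
    (f : X → X) (hf : Continuous f) (φ : X → ℝ) (hφ : Continuous φ) (x : X)
    (t : ℕ → ℕ) (β : ℕ → ℝ) (ht : Filter.Tendsto t Filter.atTop Filter.atTop)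
    (hβpos : ∀ i, 0 < β i) (hβ : Filter.Tendsto β Filter.atTop (nhds 0))
    (hctrl : ∀ i, ControlledAtScale f φ x (β i) (t i)) :
    ∀ ε > 0, ∃ N : ℕ, ∀ y ∈ ⋂ N' : ℕ, closure ((fun k => f^[k] x) '' Set.Ici N'),
      ∀ n ≥ N, |(∑ k ∈ Finset.range n, φ (f^[k] y)) / (n : ℝ)| < ε :=
  control_at_any_scale_vanishing_average_general f hf φ hφ x t β hβpos hβ hctrl
end

section
/- Let (c_j)_{j∈ℕ} be a sequence of reals bounded by M > 0, and suppose for every i ∈ ℕ the sequence is (β_i, t_i)-controlled, i.e., there exists an infinite partition of ℕ into consecutive intervals of length ≤ t_i on each of which the average of c is ≤ β_i in absolute value, where β_i → 0. Then lim_{n→∞} (1/n) sum_{j=0}^{n-1} c_j = 0. -/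
/-!
Fix a scale `i` and let `P` be its partition points. Summing the interval bounds, the partial
sum up to any point of `P` is at most `β_i` times its length; an arbitrary `n` lies in an interval
of length `≤ t_i` starting at such a point, so `|∑_{j<n} c_j| ≤ |β_i| n + M t_i`. Dividing by `n`
and letting first `n → ∞`, then `i → ∞`, gives the claim.
-/

open Finset Filter Topology

theorem tendsto_div_nhds_zero_of_forall_abs_le (f : ℕ → ℝ)
    (h : ∀ ε > 0, ∃ C, ∀ n, |f n| ≤ ε * n + C) :
    Tendsto (fun n => f n / n) atTop (𝓝 0) := by
  rw [Metric.tendsto_atTop]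
  intro ε hε
  obtain ⟨C, hC⟩ := h (ε / 2) (half_pos hε)
  obtain ⟨N, hN⟩ := Metric.tendsto_atTop.1 (tendsto_const_div_atTop_nhds_zero_nat C) (ε / 2)
    (half_pos hε)
  refine ⟨N + 1, fun n hn => ?_⟩
  have hn_pos : (0 : ℝ) < n := by exact_mod_cast (N.succ_pos.trans_le hn)
  have hCn : C / n < ε / 2 := by
    have := hN n (by omega)
    rw [Real.dist_eq, sub_zero] at this
    exact (le_abs_self _).trans_lt this
  rw [Real.dist_eq, sub_zero, abs_div, abs_of_pos hn_pos, div_lt_iff₀ hn_pos]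
  rw [div_lt_iff₀ hn_pos] at hCn
  linarith [hC n]

namespace Nat

variable {P : Set ℕ}

theorem exists_consecutive_mem_le_lt (hP0 : 0 ∈ P) (hP : ¬BddAbove P) (n : ℕ) :
    ∃ k ∈ P, ∃ l ∈ P, k ≤ n ∧ n < l ∧ ∀ m, k < m → m < l → m ∉ P := by
  classical
  have hex : ∃ l, l ∈ P ∧ n < l := not_bddAbove_iff.1 hP n
  refine ⟨Nat.findGreatest (· ∈ P) n, Nat.findGreatest_spec (zero_le n) hP0,
    Nat.find hex, (Nat.find_spec hex).1, Nat.findGreatest_le n, (Nat.find_spec hex).2,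
    fun m hkm hml hm => ?_⟩
  rcases le_or_gt m n with hmn | hnm
  · exact Nat.findGreatest_is_greatest hkm hmn hm
  · exact Nat.find_min hex hml ⟨hm, hnm⟩

end Nat

section PartitionBounds

variable {c : ℕ → ℝ} {P : Set ℕ} {β : ℝ}

theorem abs_sum_range_le_of_mem (hP0 : 0 ∈ P) (hP : ¬BddAbove P)
    (hsum : ∀ k ∈ P, ∀ l ∈ P, k < l → (∀ m, k < m → m < l → m ∉ P) →
      |∑ j ∈ Ico k l, c j| ≤ β * (l - k)) :
    ∀ l ∈ P, |∑ j ∈ range l, c j| ≤ β * l := by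
  intro l
  induction l using Nat.strong_induction_on with
  | _ l ih =>
    intro hl
    rcases Nat.eq_zero_or_pos l with rfl | hl_pos
    · simp
    obtain ⟨k, hk, l', hl', hkn, hnl', hgap⟩ := Nat.exists_consecutive_mem_le_lt hP0 hP (l - 1)
    have hkl : k < l := by omega
    have hl'l : l' = l := by
      by_contra hne
      exact hgap l hkl (by omega) hl
    subst hl'l
    calc |∑ j ∈ range l', c j|
        = |∑ j ∈ range k, c j + ∑ j ∈ Ico k l', c j| := by
          rw [sum_range_add_sum_Ico _ hkl.le]
      _ ≤ |∑ j ∈ range k, c j| + |∑ j ∈ Ico k l', c j| := abs_add_le _ _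
      _ ≤ β * k + β * (l' - k) := add_le_add (ih k hkl hk) (hsum k hk l' hl' hkl hgap)
      _ = β * l' := by ring

theorem abs_sum_Ico_le_of_abs_le {M : ℝ} (hbd : ∀ j, |c j| ≤ M) (k n : ℕ) :
    |∑ j ∈ Ico k n, c j| ≤ M * (n - k : ℕ) := by
  calc |∑ j ∈ Ico k n, c j| ≤ ∑ j ∈ Ico k n, |c j| := abs_sum_le_sum_abs _ _
    _ ≤ (Ico k n).card • M := sum_le_card_nsmul _ _ _ fun j _ => hbd j
    _ = M * (n - k : ℕ) := by rw [Nat.card_Ico, nsmul_eq_mul, mul_comm]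

theorem abs_sum_range_le_of_partition {M : ℝ} {t : ℕ} (hbd : ∀ j, |c j| ≤ M)
    (hP0 : 0 ∈ P) (hP : ¬BddAbove P)
    (hctrl : ∀ k ∈ P, ∀ l ∈ P, k < l → (∀ m, k < m → m < l → m ∉ P) →
      l - k ≤ t ∧ |∑ j ∈ Ico k l, c j| ≤ β * (l - k)) (n : ℕ) :
    |∑ j ∈ range n, c j| ≤ |β| * n + M * t := by
  obtain ⟨k, hk, l, hl, hkn, hnl, hgap⟩ := Nat.exists_consecutive_mem_le_lt hP0 hP n
  have hM : 0 ≤ M := (abs_nonneg _).trans (hbd 0)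
  have hnk : n - k ≤ t := by have := (hctrl k hk l hl (by omega) hgap).1; omega
  have hprefix := abs_sum_range_le_of_mem hP0 hP (fun k hk l hl hkl hgap =>
    (hctrl k hk l hl hkl hgap).2) k hk
  calc |∑ j ∈ range n, c j|
      = |∑ j ∈ range k, c j + ∑ j ∈ Ico k n, c j| := by rw [sum_range_add_sum_Ico _ hkn]
    _ ≤ |∑ j ∈ range k, c j| + |∑ j ∈ Ico k n, c j| := abs_add_le _ _
    _ ≤ β * k + M * (n - k : ℕ) := add_le_add hprefix (abs_sum_Ico_le_of_abs_le hbd k n)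
    _ ≤ |β| * n + M * t := by
      gcongr
      exact (le_abs_self β).trans (by gcongr)

end PartitionBounds

theorem controlled_at_all_scales_vanishing_general (c : ℕ → ℝ) (M : ℝ)
    (hbd : ∀ j, |c j| ≤ M) (t : ℕ → ℕ) (β : ℕ → ℝ)
    (hβ : Filter.Tendsto β Filter.atTop (nhds 0))
    (hctrl : ∀ i, ∃ P : Set ℕ, 0 ∈ P ∧ ¬ BddAbove P ∧
      ∀ k ∈ P, ∀ l ∈ P, k < l → (∀ m, k < m → m < l → m ∉ P) →
        l - k ≤ t i ∧ |(∑ j ∈ Finset.Ico k l, c j) / ((l : ℝ) - k)| ≤ β i) :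
    Filter.Tendsto (fun n => (∑ j ∈ Finset.range n, c j) / (n : ℝ))
      Filter.atTop (nhds 0) := by
  refine tendsto_div_nhds_zero_of_forall_abs_le _ fun ε hε => ?_
  obtain ⟨i, hi⟩ := Metric.tendsto_atTop.1 hβ ε hε
  replace hi : |β i| < ε := by simpa using hi i le_rfl
  obtain ⟨P, hP0, hP, hPi⟩ := hctrl i
  refine ⟨M * t i, fun n => ?_⟩
  have hsum := abs_sum_range_le_of_partition hbd hP0 hP (fun k hk l hl hkl hgap => by
    have hlen : (0 : ℝ) < l - k := sub_pos.2 (by exact_mod_cast hkl)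
    obtain ⟨hlk, havg⟩ := hPi k hk l hl hkl hgap
    rw [abs_div, abs_of_pos hlen, div_le_iff₀ hlen] at havg
    exact ⟨hlk, havg⟩) n
  exact hsum.trans (by gcongr)

/-- A bounded sequence controlled at every scale, with `β_i → 0`, has vanishing
Birkhoff averages. -/
theorem controlled_at_all_scales_vanishing (c : ℕ → ℝ) (M : ℝ) (hM : 0 < M)
    (hbd : ∀ j, |c j| ≤ M) (t : ℕ → ℕ) (β : ℕ → ℝ) (hβpos : ∀ i, 0 < β i)
    (hβ : Filter.Tendsto β Filter.atTop (nhds 0))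
    (hctrl : ∀ i, ∃ P : Set ℕ, 0 ∈ P ∧ ¬ BddAbove P ∧
      ∀ k ∈ P, ∀ l ∈ P, k < l → (∀ m, k < m → m < l → m ∉ P) →
        l - k ≤ t i ∧ |(∑ j ∈ Finset.Ico k l, c j) / ((l : ℝ) - k)| ≤ β i) :
    Filter.Tendsto (fun n => (∑ j ∈ Finset.range n, c j) / (n : ℝ))
      Filter.atTop (nhds 0) :=
  controlled_at_all_scales_vanishing_general c M hbd t β hβ hctrl
end

section
/- Let (c_j)_{j=0}^{π-1} be reals with |c_j| ≤ C, and suppose: (i) (1/π) sum_{j=0}^{π-1} c_j < -b, for some b > 0; (ii) for all 1 ≤ j ≤ ℓ the partial averages (1/j) sum_{m=0}^{j-1} c_m < -b; (iii) there exist block boundaries ℓ = S_0 < S_1 < ... < S_n with S_n = ℓ + T(n) ≤ π - 1 such that on each block [S_{i-1}, S_i) of length ≤ t_k the average of c is ≥ -b, and the tail [S_n, π) has length ≤ N_d, with (t_k + N_d)·C < (π/4)·a for some 0 < a < b satisfying the overall average < -b - a/4. Then for every 1 ≤ j ≤ π one has (1/j) sum_{m=0}^{j-1} c_m < -b. -/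
/-!
Suppose the average up to some `j ≤ π` were at least `-b`; since the first `ℓ` partial averages
are below `-b`, we have `ℓ < j`. Going forward from `j`, the sum to the end of the block containing
`j` costs at most `C t`, the complete blocks after it have average at least `-b`, and the tail after
`S n` costs at most `C N_d`. Hence the total sum is at least `-b π - C (t + N_d) > -(b + a/4) π`,
contradicting the bound on the total average.
-/

open Finset

lemma mul_sub_le_sum_Ico {c : ℕ → ℝ} {m : ℝ} {A B : ℕ} (hAB : A ≤ B)
    (hc : ∀ k ∈ Ico A B, m ≤ c k) : m * ((B : ℝ) - A) ≤ ∑ k ∈ Ico A B, c k := by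
  have h := card_nsmul_le_sum (Ico A B) c m hc
  rwa [Nat.card_Ico, nsmul_eq_mul, Nat.cast_sub hAB, mul_comm] at h

lemma mul_sub_le_sum_Ico_of_blocks {c : ℕ → ℝ} {m : ℝ} {S : ℕ → ℕ} {n : ℕ}
    (hS : MonotoneOn S (Set.Iic n))
    (hblock : ∀ i < n, m * ((S (i + 1) : ℝ) - S i) ≤ ∑ k ∈ Ico (S i) (S (i + 1)), c k)
    {p q : ℕ} (hpq : p ≤ q) (hqn : q ≤ n) :
    m * ((S q : ℝ) - S p) ≤ ∑ k ∈ Ico (S p) (S q), c k := by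
  induction q, hpq using Nat.le_induction with
  | base => simp
  | succ q hpq ih =>
    have hSpq : S p ≤ S q := hS (Set.mem_Iic.2 (by omega)) (Set.mem_Iic.2 (by omega)) hpq
    have hSq : S q ≤ S (q + 1) := hS (Set.mem_Iic.2 (by omega)) (Set.mem_Iic.2 hqn) (by omega)
    rw [← sum_Ico_consecutive c hSpq hSq]
    linarith [ih (by omega), hblock q (by omega)]

lemma exists_lt_le_succ_of_lt_of_le (S : ℕ → ℕ) {n j : ℕ} (h0 : S 0 < j) (hn : j ≤ S n) :
    ∃ i < n, S i < j ∧ j ≤ S (i + 1) := by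
  induction n with
  | zero => omega
  | succ n ih =>
    by_cases hj : j ≤ S n
    · obtain ⟨i, hin, hi⟩ := ih hj
      exact ⟨i, by omega, hi⟩
    · exact ⟨n, by omega, by omega, hn⟩

lemma sum_Ico_ge_of_block_control {c : ℕ → ℝ} {S : ℕ → ℕ} {n t Nd π j : ℕ} {b C : ℝ}
    (hb : 0 ≤ b) (hC : 0 ≤ C) (hc : ∀ k, -C ≤ c k)
    (hS : MonotoneOn S (Set.Iic n)) (hSn : S n ≤ π)
    (hblocklen : ∀ i < n, S (i + 1) - S i ≤ t)
    (hblock : ∀ i < n, -b * ((S (i + 1) : ℝ) - S i) ≤ ∑ k ∈ Ico (S i) (S (i + 1)), c k)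
    (htail : π - S n ≤ Nd) (hj0 : S 0 < j) (hjπ : j ≤ π) :
    -b * ((π : ℝ) - j) - C * (t + Nd) ≤ ∑ k ∈ Ico j π, c k := by
  have hbounded {A B : ℕ} (hAB : A ≤ B) := mul_sub_le_sum_Ico (c := c) hAB fun k _ => hc k
  rcases le_or_gt j (S n) with hjn | hnj
  · obtain ⟨i, hin, hij, hji⟩ := exists_lt_le_succ_of_lt_of_le S hj0 hjn
    have hSi : S (i + 1) ≤ S n := hS (Set.mem_Iic.2 (by omega)) (Set.mem_Iic.2 le_rfl) hin
    have hSi_le : (S (i + 1) : ℝ) ≤ j + t := by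
      exact_mod_cast (by have := hblocklen i hin; omega : S (i + 1) ≤ j + t)
    have hSi_ge : (j : ℝ) ≤ S (i + 1) := by exact_mod_cast hji
    rw [← sum_Ico_consecutive c hji (hSi.trans hSn), ← sum_Ico_consecutive c hSi hSn]
    have hfull := mul_sub_le_sum_Ico_of_blocks hS hblock (Nat.succ_le_of_lt hin) le_rfl
    have hSn_le : (S n : ℝ) ≤ π := by exact_mod_cast hSn
    have hπ_le : (π : ℝ) ≤ S n + Nd := by exact_mod_cast (by omega : π ≤ S n + Nd)
    linarith [hbounded hji, hbounded hSn, mul_le_mul_of_nonneg_left hSi_le hC,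
      mul_le_mul_of_nonneg_left hπ_le hC, mul_le_mul_of_nonneg_left hSi_ge hb,
      mul_le_mul_of_nonneg_left hSn_le hb]
  · have hπj : (π : ℝ) ≤ j + (t + Nd) := by exact_mod_cast (by omega : π ≤ j + (t + Nd))
    have hjπR : (j : ℝ) ≤ π := by exact_mod_cast hjπ
    linarith [hbounded hjπ, mul_le_mul_of_nonneg_left (sub_le_iff_le_add'.2 hπj) hC,
      mul_nonneg hb (sub_nonneg.2 hjπR)]

theorem block_control_partial_averages_general (π ℓ n t Nd : ℕ) (C a b : ℝ)
    (c : ℕ → ℝ) (S : ℕ → ℕ)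
    (hb : 0 < b)
    (hbd : ∀ j, |c j| ≤ C)
    (hS0 : S 0 = ℓ) (hSmono : StrictMonoOn S (Set.Iic n)) (hSn : S n ≤ π - 1)
    (hblocklen : ∀ i, 1 ≤ i → i ≤ n → S i - S (i - 1) ≤ t)
    (hblockavg : ∀ i, 1 ≤ i → i ≤ n →
      (-b) * ((S i : ℝ) - S (i - 1)) ≤ ∑ j ∈ Finset.Ico (S (i - 1)) (S i), c j)
    (htail : π - S n ≤ Nd)
    (hsmall : ((t : ℝ) + Nd) * C < ((π : ℝ) / 4) * a)
    (htotal : (∑ j ∈ Finset.range π, c j) / (π : ℝ) < -b - a / 4)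
    (hpartial : ∀ j, 1 ≤ j → j ≤ ℓ → (∑ m ∈ Finset.range j, c m) / (j : ℝ) < -b) :
    ∀ j, 1 ≤ j → j ≤ π → (∑ m ∈ Finset.range j, c m) / (j : ℝ) < -b := by
  intro j hj hjπ
  by_contra! hj_avg
  have hℓj : S 0 < j := by
    by_contra! hjℓ
    exact (hpartial j hj (hS0 ▸ hjℓ)).not_ge hj_avg
  have hhead : -b * j ≤ ∑ m ∈ range j, c m := (le_div_iff₀ (by exact_mod_cast hj)).1 hj_avg
  have hrest := sum_Ico_ge_of_block_control hb.le ((abs_nonneg _).trans (hbd 0))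
    (fun k => neg_le_of_abs_le (hbd k)) hSmono.monotoneOn (by omega)
    (fun i hi => by simpa using hblocklen (i + 1) (by omega) (by omega))
    (fun i hi => by simpa using hblockavg (i + 1) (by omega) (by omega)) htail hℓj hjπ
  have htotal' := (div_lt_iff₀ (by exact_mod_cast hj.trans hjπ)).1 htotal
  rw [← sum_range_add_sum_Ico c hjπ] at htotal'
  linarith

/-- Abstract version of the contradiction argument (Equation 3.2): control of
the averages by blocks from behind, plus a strict bound on the total average,
forces all partial averages below `-b`. -/
theorem block_control_partial_averages (π ℓ n t Nd : ℕ) (C a b : ℝ)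
    (c : ℕ → ℝ) (S : ℕ → ℕ)
    (hC : 0 < C) (hb : 0 < b) (ha : 0 < a) (hab : a < b) (hπ : 0 < π)
    (hbd : ∀ j, |c j| ≤ C)
    (hS0 : S 0 = ℓ) (hSmono : StrictMonoOn S (Set.Iic n)) (hSn : S n ≤ π - 1)
    (hblocklen : ∀ i, 1 ≤ i → i ≤ n → S i - S (i - 1) ≤ t)
    (hblockavg : ∀ i, 1 ≤ i → i ≤ n →
      (-b) * ((S i : ℝ) - S (i - 1)) ≤ ∑ j ∈ Finset.Ico (S (i - 1)) (S i), c j)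
    (htail : π - S n ≤ Nd)
    (hsmall : ((t : ℝ) + Nd) * C < ((π : ℝ) / 4) * a)
    (htotal : (∑ j ∈ Finset.range π, c j) / (π : ℝ) < -b - a / 4)
    (hpartial : ∀ j, 1 ≤ j → j ≤ ℓ → (∑ m ∈ Finset.range j, c m) / (j : ℝ) < -b) :
    ∀ j, 1 ≤ j → j ≤ π → (∑ m ∈ Finset.range j, c m) / (j : ℝ) < -b :=
  block_control_partial_averages_general π ℓ n t Nd C a b c S hb hbd hS0 hSmono hSn hblocklen
    hblockavg htail hsmall htotal hpartial
end

section
/- Let f be a homeomorphism of a compact metric space X and let K' ⊂ K be compact f-invariant sets. Suppose every point x ∈ K \ (K' ∪ O) either satisfies ω(x) ⊂ K' or α(x) ⊂ K', where O is a single periodic orbit contained in K and disjoint from K'. Then every ergodic f-invariant probability measure μ supported on K is either supported on K' or equals the periodic measure on O. -/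
/-!
By Poincaré recurrence (for `f` and for `f⁻¹`), `μ`-almost every point lies in its own ω- and
α-limit sets; such a point of `K \ (K' ∪ O)` would lie in `K'`, so `μ (K \ (K' ∪ O)) = 0`.
The orbit `O` is countable and forward invariant, so by ergodicity it has measure `0` or `1`;
in the first case `μ` is carried by `K'`.
-/

open MeasureTheory Filter Set

theorem MapClusterPt.mem_iInter_closure_image_Ici {X : Type*} [TopologicalSpace X] {x : X}
    {u : ℕ → X} (h : MapClusterPt x atTop u) : x ∈ ⋂ N : ℕ, closure (u '' Ici N) :=
  mem_iInter.2 fun N => clusterPt_iff_forall_mem_closure.1 h _ (image_mem_map (Ici_mem_atTop N))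

theorem MeasureTheory.MeasurePreserving.ae_mem_iInter_closure_iterate_image_Ici {X : Type*}
    [TopologicalSpace X] [SecondCountableTopology X] [MeasurableSpace X] [OpensMeasurableSpace X]
    {g : X → X} {μ : Measure X} [IsFiniteMeasure μ] (hg : MeasurePreserving g μ μ) :
    ∀ᵐ x ∂μ, x ∈ ⋂ N : ℕ, closure ((fun k => g^[k] x) '' Ici N) :=
  hg.conservative.ae_frequently_mem_of_mem_nhds.mono fun _ hx =>
    (mapClusterPt_iff_frequently.2 hx).mem_iInter_closure_image_Ici

theorem ergodic_measure_dichotomy_general {X : Type*} [MetricSpace X] [CompactSpace X]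
    [MeasurableSpace X] [BorelSpace X]
    (f : X ≃ₜ X) (K K' : Set X)
    (q : X)
    (O : Set X) (hO : O = Set.range (fun k : ℕ => (⇑f)^[k] q))
    (hdich : ∀ x ∈ K \ (K' ∪ O),
      (⋂ N : ℕ, closure ((fun k => (⇑f)^[k] x) '' Set.Ici N)) ⊆ K' ∨
      (⋂ N : ℕ, closure ((fun k => (⇑f.symm)^[k] x) '' Set.Ici N)) ⊆ K')
    (μ : Measure X) [IsProbabilityMeasure μ]
    (hErg : Ergodic (⇑f) μ) (hμK : μ K = 1) :
    μ K' = 1 ∨ μ O = 1 := by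
  have hf : MeasurePreserving f μ μ := hErg.toMeasurePreserving
  have hf_symm : MeasurePreserving f.symm μ μ := hf.symm f.toMeasurableEquiv
  have hwandering : μ (K \ (K' ∪ O)) = 0 := by
    rw [measure_eq_zero_iff_ae_notMem]
    filter_upwards [hf.ae_mem_iInter_closure_iterate_image_Ici,
      hf_symm.ae_mem_iInter_closure_iterate_image_Ici] with x hω hα hx
    exact hx.2 <| .inl <| (hdich x hx).elim (· hω) (· hα)
  have hO_meas : MeasurableSet O := hO ▸ (countable_range _).measurableSet
  have hO_fwd : f '' O ⊆ O := by
    rw [hO]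
    rintro _ ⟨_, ⟨k, rfl⟩, rfl⟩
    exact ⟨k + 1, Function.iterate_succ_apply' ..⟩
  rcases hErg.ae_empty_or_univ_of_image_ae_le hO_meas.nullMeasurableSet hO_fwd.eventuallyLE
    with hO_null | hO_full
  · left
    have hK_diff : K \ K' ⊆ O ∪ K \ (K' ∪ O) := by
      rintro x ⟨hxK, hxK'⟩
      by_cases hxO : x ∈ O
      exacts [.inl hxO, .inr ⟨hxK, fun h => h.elim hxK' hxO⟩]
    have hKK' : K ≤ᵐ[μ] K' := ae_le_set.2 <|
      measure_mono_null hK_diff (measure_union_null (ae_eq_empty.1 hO_null) hwandering)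
    exact le_antisymm prob_le_one (hμK ▸ measure_mono_ae hKK')
  · right
    rw [measure_congr hO_full, measure_univ]

/-- If every point of `K \ (K' ∪ O)` has ω-limit set in `K'` or α-limit set in
`K'`, where `O` is a periodic orbit in `K` disjoint from `K'`, then every
ergodic measure on `K` is supported on `K'` or on `O`. -/
theorem ergodic_measure_dichotomy {X : Type*} [MetricSpace X] [CompactSpace X]
    [MeasurableSpace X] [BorelSpace X]
    (f : X ≃ₜ X) (K K' : Set X) (hK : IsCompact K) (hK' : IsCompact K')
    (hKinv : ⇑f '' K = K) (hK'inv : ⇑f '' K' = K') (hsub : K' ⊆ K)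
    (q : X) (p : ℕ) (hp : 0 < p) (hq : (⇑f)^[p] q = q)
    (O : Set X) (hO : O = Set.range (fun k : ℕ => (⇑f)^[k] q))
    (hOK : O ⊆ K) (hOK' : Disjoint O K')
    (hdich : ∀ x ∈ K \ (K' ∪ O),
      (⋂ N : ℕ, closure ((fun k => (⇑f)^[k] x) '' Set.Ici N)) ⊆ K' ∨
      (⋂ N : ℕ, closure ((fun k => (⇑f.symm)^[k] x) '' Set.Ici N)) ⊆ K')
    (μ : Measure X) [IsProbabilityMeasure μ]
    (hErg : Ergodic (⇑f) μ) (hμK : μ K = 1) :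
    μ K' = 1 ∨ μ O = 1 :=
  ergodic_measure_dichotomy_general f K K' q O hO hdich μ hErg hμK
end
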